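/- Equip ℝ^{n+1}, with coordinates (x₀,…,x_n), with the Minkowski bilinear form ⟪x,y⟫ = −x₀y₀ + x₁y₁ + ⋯ + x_n y_n, and let Hⁿ = {x : ⟪x,x⟫ = −1, x₀ > 0}. Let A₁,…,A_{n+2} : ℝ → ℝ^{n+1} be C¹ maps with Aᵢ(t) ∈ Hⁿ for all t, let t₀ ∈ ℝ be such that A₁(t₀),…,A_{n+2}(t₀) are in general position (every n+1 of them linearly independent in ℝ^{n+1}), and let α₁,…,α_{n+2} be nonzero reals with Σᵢ αᵢAᵢ(t₀) = 0. Then Σ_{1≤i<j≤n+2} αᵢα_j · d/dt[⟪Aᵢ(t) − A_j(t), Aᵢ(t) − A_j(t)⟫] evaluated at t = t₀ equals 0. (This is the k = 1 case, proved in the paper within Lemma 4.6, of the hyperbolic volume-balance identity; since ⟪P−Q,P−Q⟫ = 2cosh d(P,Q) − 2 with d the hyperbolic distance, it is equivalent to Σ_{i<j} αᵢα_j sinh(d(Aᵢ(t₀),A_j(t₀))) · d/dt[d(Aᵢ(t),A_j(t))]|_{t₀} = 0.) -/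

import Mathlib

/-- The Minkowski bilinear form on `ℝ^{m+1}` with coordinates `(x₀, …, x_m)`:
`⟪x,y⟫ = −x₀y₀ + x₁y₁ + ⋯ + x_m y_m`. -/
def mink {m : ℕ} (x y : Fin (m + 1) → ℝ) : ℝ :=
  ∑ i, (if i = 0 then -(x i * y i) else x i * y i)

/-- The hyperboloid model of hyperbolic space: `⟪x,x⟫ = −1` and `x₀ > 0`. -/
def InHyperbolic {m : ℕ} (x : Fin (m + 1) → ℝ) : Prop :=
  mink x x = -1 ∧ 0 < x 0

/-!
For any symmetric bilinear form `Q`, a Lagrange-type identity gives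
`∑_{i<j} aᵢ aⱼ Q(xᵢ - xⱼ, xᵢ - xⱼ) = (∑ aᵢ) (∑ aᵢ Q(xᵢ, xᵢ)) - Q(∑ aᵢ xᵢ, ∑ aᵢ xᵢ)`.
On the hyperboloid `Q(Aᵢ, Aᵢ) = -1`, so the weighted sum of squared distances at time `t` is
`-(∑ αᵢ)² - Q(v t, v t)` with `v t = ∑ αᵢ Aᵢ(t)`. Its derivative at `t₀` is
`-2 Q(v t₀, v' t₀)`, which vanishes because `v t₀ = 0`.
-/

open Finset

theorem Finset.sum_sum_eq_sum_add_sum_sum_lt {ι M : Type*} [LinearOrder ι] [Fintype ι]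
    [AddCommMonoid M] (f : ι → ι → M) :
    ∑ i, ∑ j, f i j = ∑ i, f i i + ∑ i, ∑ j, if i < j then f i j + f j i else 0 := by
  have hsplit : ∀ i j, f i j = (if i = j then f i j else 0) +
      ((if i < j then f i j else 0) + if j < i then f i j else 0) := by
    intro i j
    rcases lt_trichotomy i j with h | rfl | h
    · simp [h, h.ne, h.not_gt]
    · simp
    · simp [h, h.ne', h.not_gt]
  calc ∑ i, ∑ j, f i j
      = ∑ i, f i i + (∑ i, ∑ j, (if i < j then f i j else 0) +
          ∑ i, ∑ j, if j < i then f i j else 0) := by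
        rw [sum_congr rfl fun i _ => sum_congr rfl fun j _ => hsplit i j]
        simp only [sum_add_distrib, sum_ite_eq, mem_univ, if_true]
    _ = _ := by
        rw [sum_comm (f := fun i j => if j < i then f i j else 0), ← sum_add_distrib]
        simp only [← sum_add_distrib, ← ite_add_zero]

namespace LinearMap.BilinForm

variable {R M ι : Type*} [CommRing R] [AddCommGroup M] [Module R M] [LinearOrder ι] [Fintype ι]

theorem IsSymm.sum_sum_lt_mul_apply_sub {B : LinearMap.BilinForm R M} (hB : B.IsSymm) (a : ι → R)
    (x : ι → M) :
    ∑ i, ∑ j, (if i < j then a i * a j * B (x i - x j) (x i - x j) else 0) =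
      (∑ i, a i) * ∑ i, a i * B (x i) (x i) - B (∑ i, a i • x i) (∑ i, a i • x i) := by
  have hexpand : B (∑ i, a i • x i) (∑ i, a i • x i) = ∑ i, ∑ j, a i * a j * B (x i) (x j) := by
    simp only [sum_left, sum_right, map_smul, smul_apply, smul_eq_mul, mul_sum]
    rw [sum_comm]
    exact sum_congr rfl fun i _ => sum_congr rfl fun j _ => by ring
  rw [sum_mul_sum, hexpand, sum_sum_eq_sum_add_sum_sum_lt (fun i j => a i * (a j * B (x j) (x j))),
    sum_sum_eq_sum_add_sum_sum_lt (fun i j => a i * a j * B (x i) (x j)),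
    add_sub_add_comm]
  have hdiag : ∑ i, a i * (a i * B (x i) (x i)) - ∑ i, a i * a i * B (x i) (x i) = 0 := by
    simp only [mul_assoc, sub_self]
  rw [hdiag, zero_add, ← sum_sub_distrib]
  refine sum_congr rfl fun i _ => ?_
  rw [← sum_sub_distrib]
  refine sum_congr rfl fun j _ => ?_
  split_ifs
  · simp only [map_sub, LinearMap.sub_apply, hB.eq (x j) (x i)]
    ring
  · simp

theorem hasDerivAt_apply {𝕜 E : Type*} [NontriviallyNormedField 𝕜] [CompleteSpace 𝕜]
    [NormedAddCommGroup E] [NormedSpace 𝕜 E] [FiniteDimensional 𝕜 E] (B : LinearMap.BilinForm 𝕜 E)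
    {u v : 𝕜 → E} {u' v' : E} {t : 𝕜} (hu : HasDerivAt u u' t) (hv : HasDerivAt v v' t) :
    HasDerivAt (fun s => B (u s) (v s)) (B (u t) v' + B u' (v t)) t :=
  B.toContinuousBilinearMap.hasDerivAt_of_bilinear (fun _ => hu) fun _ => hv

end LinearMap.BilinForm

theorem mink_comm {m : ℕ} (x y : Fin (m + 1) → ℝ) : mink x y = mink y x :=
  sum_congr rfl fun k _ => by rw [mul_comm]

theorem mink_add_left {m : ℕ} (x y z : Fin (m + 1) → ℝ) :
    mink (x + y) z = mink x z + mink y z := by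
  simp only [mink, ← sum_add_distrib]
  exact sum_congr rfl fun k _ => by simp only [Pi.add_apply]; split_ifs <;> ring

theorem mink_smul_left {m : ℕ} (c : ℝ) (x y : Fin (m + 1) → ℝ) :
    mink (c • x) y = c • mink x y := by
  simp only [mink, smul_eq_mul, mul_sum]
  exact sum_congr rfl fun k _ => by simp only [Pi.smul_apply, smul_eq_mul]; split_ifs <;> ring

def minkForm (m : ℕ) : LinearMap.BilinForm ℝ (Fin (m + 1) → ℝ) :=
  LinearMap.mk₂ ℝ mink mink_add_left mink_smul_left
    (fun x y z => by simp only [mink_comm x, mink_add_left])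
    (fun c x y => by simp only [mink_comm x, mink_smul_left])

@[simp]
theorem minkForm_apply {m : ℕ} (x y : Fin (m + 1) → ℝ) : minkForm m x y = mink x y := rfl

theorem minkForm_isSymm (m : ℕ) : (minkForm m).IsSymm :=
  ⟨fun x y => mink_comm x y⟩

theorem sum_sum_lt_mul_mink_sub {m : ℕ} {ι : Type*} [LinearOrder ι] [Fintype ι]
    (x : ι → Fin (m + 1) → ℝ) (hx : ∀ i, mink (x i) (x i) = -1) (a : ι → ℝ) :
    ∑ i, ∑ j, (if i < j then a i * a j * mink (x i - x j) (x i - x j) else 0) =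
      -(∑ i, a i) ^ 2 - mink (∑ i, a i • x i) (∑ i, a i • x i) := by
  have := (minkForm_isSymm m).sum_sum_lt_mul_apply_sub a x
  simp only [minkForm_apply, hx] at this
  rw [this, ← sum_mul]
  ring

theorem hyperbolic_weighted_sum_deriv_eq_zero_general {n : ℕ}
    (A : Fin (n + 2) → ℝ → (Fin (n + 1) → ℝ))
    (hA : ∀ i, ContDiff ℝ 1 (A i))
    (hAhyp : ∀ i t, InHyperbolic (A i t))
    (t₀ : ℝ)
    (α : Fin (n + 2) → ℝ)
    (hsum : ∑ i, α i • A i t₀ = 0) :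
    ∑ i : Fin (n + 2), ∑ j : Fin (n + 2),
      (if i < j then
        α i * α j * deriv (fun t : ℝ => mink (A i t - A j t) (A i t - A j t)) t₀
      else 0) = 0 := by
  have hA' : ∀ i, HasDerivAt (A i) (deriv (A i) t₀) t₀ := fun i =>
    ((hA i).differentiable one_ne_zero).differentiableAt.hasDerivAt
  have hdist : ∀ i j, HasDerivAt (fun t => mink (A i t - A j t) (A i t - A j t))
      (deriv (fun t => mink (A i t - A j t) (A i t - A j t)) t₀) t₀ := fun i j =>
    ((minkForm n).hasDerivAt_apply ((hA' i).sub (hA' j))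
      ((hA' i).sub (hA' j))).differentiableAt.hasDerivAt
  have hlhs : HasDerivAt
      (fun t => ∑ i, ∑ j, if i < j then α i * α j * mink (A i t - A j t) (A i t - A j t) else 0)
      (∑ i, ∑ j, if i < j then
        α i * α j * deriv (fun t => mink (A i t - A j t) (A i t - A j t)) t₀ else 0) t₀ := by
    refine HasDerivAt.fun_sum fun i _ => HasDerivAt.fun_sum fun j _ => ?_
    split_ifs
    · exact (hdist i j).const_mul _
    · exact hasDerivAt_const _ _
  have hcenter : HasDerivAt (fun t => ∑ i, α i • A i t) (∑ i, α i • deriv (A i) t₀) t₀ :=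
    HasDerivAt.fun_sum fun i _ => (hA' i).const_smul (α i)
  have hrhs : HasDerivAt
      (fun t => ∑ i, ∑ j, if i < j then α i * α j * mink (A i t - A j t) (A i t - A j t) else 0)
      0 t₀ := by
    simp_rw [sum_sum_lt_mul_mink_sub _ (fun i => (hAhyp i _).1)]
    have h := ((minkForm n).hasDerivAt_apply hcenter hcenter).const_sub (-(∑ i, α i) ^ 2)
    simp only [hsum, map_zero, LinearMap.zero_apply, add_zero, neg_zero] at h
    exact h
  exact hlhs.unique hrhs

/-- For a `C¹` motion of a degenerate hyperbolic `(n+1)`-simplex on the hyperboloid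
`Hⁿ ⊂ ℝ^{n+1}`, the `α`-weighted sum of the derivatives of the Minkowski squared distances
vanishes (the `k = 1` case of the hyperbolic volume-balance identity). -/
theorem hyperbolic_weighted_sum_deriv_eq_zero {n : ℕ}
    (A : Fin (n + 2) → ℝ → (Fin (n + 1) → ℝ))
    (hA : ∀ i, ContDiff ℝ 1 (A i))
    (hAhyp : ∀ i t, InHyperbolic (A i t))
    (t₀ : ℝ)
    (hgp : ∀ s : Finset (Fin (n + 2)), s.card = n + 1 →
      LinearIndependent ℝ (fun i : ↥s => A i.1 t₀))
    (α : Fin (n + 2) → ℝ) (hα : ∀ i, α i ≠ 0)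
    (hsum : ∑ i, α i • A i t₀ = 0) :
    ∑ i : Fin (n + 2), ∑ j : Fin (n + 2),
      (if i < j then
        α i * α j * deriv (fun t : ℝ => mink (A i t - A j t) (A i t - A j t)) t₀
      else 0) = 0 :=
  hyperbolic_weighted_sum_deriv_eq_zero_general A hA hAhyp t₀ α hsum
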